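/- Let A be an N×N real matrix (N ≥ 1) and define S₂(A) = ½((Tr A)² − Tr(A²)). If A = B·C where B and C are symmetric N×N real matrices and B is positive semidefinite, then S₂(A) ≤ ((N−1)/(2N))·(Tr A)². -/

import Mathlib

/-!
Write `B = R²` with `R = √B` symmetric. By cyclicity of the trace, `A = R·(R C)` has the same
`Tr A` and `Tr (A²)` as the symmetric matrix `M = R C R`. For symmetric `M`,
`Tr (M²) = ∑ᵢⱼ Mᵢⱼ² ≥ ∑ᵢ Mᵢᵢ² ≥ (Tr M)² / N` by Cauchy–Schwarz, and `N · Tr (A²) ≥ (Tr A)²`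
is a rearrangement of the claim.
-/

open Matrix

/-- `S₂(A) = ½((Tr A)² − Tr(A²))`, the second elementary symmetric function of the
eigenvalues of `A`. -/
noncomputable def S2 {N : ℕ} (A : Matrix (Fin N) (Fin N) ℝ) : ℝ :=
  ((trace A) ^ 2 - trace (A * A)) / 2

namespace Matrix

variable {n : Type*} [Fintype n]

theorem IsSymm.trace_mul_self_eq_sum_sq {M : Matrix n n ℝ} (hM : M.IsSymm) :
    trace (M * M) = ∑ i, ∑ j, M i j ^ 2 := by
  refine Finset.sum_congr rfl fun i _ => Finset.sum_congr rfl fun j _ => ?_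
  dsimp only
  rw [hM.apply i j, sq]

theorem IsSymm.sq_trace_le_card_mul_trace_mul_self {M : Matrix n n ℝ} (hM : M.IsSymm) :
    trace M ^ 2 ≤ Fintype.card n * trace (M * M) := by
  have hdiag : ∑ i, M i i ^ 2 ≤ trace (M * M) := by
    rw [hM.trace_mul_self_eq_sum_sq]
    exact Finset.sum_le_sum fun i _ =>
      Finset.single_le_sum (f := fun j => M i j ^ 2) (fun j _ => sq_nonneg _) (Finset.mem_univ i)
  calc trace M ^ 2 ≤ Fintype.card n * ∑ i, M i i ^ 2 := sq_sum_le_card_mul_sum_sq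
    _ ≤ Fintype.card n * trace (M * M) := by gcongr

theorem trace_mul_mul_self_comm {R : Type*} [CommSemiring R] (X Y : Matrix n n R) :
    trace (X * Y * (X * Y)) = trace (Y * X * (Y * X)) := by
  rw [mul_assoc, trace_mul_comm, ← mul_assoc, ← mul_assoc]

open scoped MatrixOrder in
theorem PosSemidef.sq_trace_mul_le_card_mul_trace [DecidableEq n] {B C : Matrix n n ℝ}
    (hB : B.PosSemidef) (hC : C.IsSymm) :
    trace (B * C) ^ 2 ≤ Fintype.card n * trace (B * C * (B * C)) := by
  set R := CFC.sqrt B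
  have hRR : R * R = B := CFC.sqrt_mul_sqrt_self B hB.nonneg
  have hR : R.IsSymm := isHermitian_iff_isSymm.mp (CFC.sqrt_nonneg B).posSemidef.isHermitian
  have hM : (R * C * R).IsSymm := by
    rw [IsSymm, transpose_mul, transpose_mul, hR.eq, hC.eq, mul_assoc]
  have htr : trace (B * C) = trace (R * C * R) := by
    rw [← hRR, mul_assoc, trace_mul_comm]
  have htr_sq : trace (B * C * (B * C)) = trace (R * C * R * (R * C * R)) := by
    rw [← hRR, mul_assoc R R C, trace_mul_mul_self_comm]
  rw [htr, htr_sq]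
  exact hM.sq_trace_le_card_mul_trace_mul_self

end Matrix

theorem stmt_0_general {N : ℕ} (A B C : Matrix (Fin N) (Fin N) ℝ)
    (hC : C.IsSymm) (hBpsd : B.PosSemidef) (hA : A = B * C) :
    S2 A ≤ ((N - 1 : ℝ) / (2 * N)) * (trace A) ^ 2 := by
  obtain rfl | hN := N.eq_zero_or_pos
  · simp [S2, trace]
  have key : trace A ^ 2 ≤ N * trace (A * A) := by
    simpa [← hA] using hBpsd.sq_trace_mul_le_card_mul_trace hC
  have hN' : (0 : ℝ) < N := by exact_mod_cast hN
  rw [S2, div_le_iff₀ two_pos, div_mul_eq_mul_div, div_mul_eq_mul_div,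
    le_div_iff₀ (by positivity)]
  nlinarith

/-- Generalized Newton inequality: if `A = B·C` with `B`, `C` symmetric and `B` positive
semidefinite, then `S₂(A) ≤ ((N−1)/(2N))·(Tr A)²`. -/
theorem stmt_0 {N : ℕ} (hN : 1 ≤ N) (A B C : Matrix (Fin N) (Fin N) ℝ)
    (hB : B.IsSymm) (hC : C.IsSymm) (hBpsd : B.PosSemidef) (hA : A = B * C) :
    S2 A ≤ ((N - 1 : ℝ) / (2 * N)) * (trace A) ^ 2 :=
  stmt_0_general A B C hC hBpsd hA
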